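/- Fix (w, b) and d : I_u → {−1, 1}. Suppose C is a partition of I_l into nonempty label-pure clusters (common labels ŷ_k) such that each cluster is contained in I⁺_{(w,b)} or in I⁻_{(w,b)}, and D is a partition of I_u into nonempty clusters on each of which d is constant (common value d_k) and each of which is contained in one of I⁺⁺_{(w,b,d)}, I⁺⁻_{(w,b,d)}, I⁻⁺_{(w,b,d)}, I⁻⁻_{(w,b,d)}. Then the S³VM objective equals the weighted aggregated objective at the centroids: J(w, b, d) = (1/2)‖w‖² + M_l * Σ_k |C_k| * max(0, 1 − ŷ_k * (⟪w, x̄_{C_k}⟫ + b)) + M_u * Σ_k |D_k| * max(0, 1 − d_k * (⟪w, x̄_{D_k}⟫ + b)). -/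
import Mathlib


open Finset
open scoped RealInnerProductSpace

noncomputable section

/-- The cluster of index `k` within the index set `S`. -/
def clusterIn {n K : ℕ} (S : Finset (Fin n)) (c : Fin n → Fin K) (k : Fin K) :
    Finset (Fin n) :=
  S.filter fun i => c i = k

/-- Centroid of a finite set of data points. -/
def centroidOf {n m : ℕ} (x : Fin n → EuclideanSpace ℝ (Fin m))
    (S : Finset (Fin n)) : EuclideanSpace ℝ (Fin m) :=
  (S.card : ℝ)⁻¹ • ∑ i ∈ S, x i

lemma inner_centroid {n m : ℕ} (x : Fin n → EuclideanSpace ℝ (Fin m))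
    (w : EuclideanSpace ℝ (Fin m)) (S : Finset (Fin n)) :
    ⟪w, centroidOf x S⟫ = (S.card : ℝ)⁻¹ * ∑ i ∈ S, ⟪w, x i⟫ := by
  simp [centroidOf, inner_smul_right, inner_sum]

lemma hinge_cluster {n m : ℕ} (x : Fin n → EuclideanSpace ℝ (Fin m))
    (w : EuclideanSpace ℝ (Fin m)) (b a : ℝ) (S : Finset (Fin n)) (hS : S.Nonempty)
    (hside : (∀ i ∈ S, 0 < 1 - a * (⟪w, x i⟫ + b)) ∨
      (∀ i ∈ S, 1 - a * (⟪w, x i⟫ + b) ≤ 0)) :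
    ∑ i ∈ S, max 0 (1 - a * (⟪w, x i⟫ + b)) =
      (S.card : ℝ) * max 0 (1 - a * (⟪w, centroidOf x S⟫ + b)) := by
  have hc : (0:ℝ) < (S.card : ℝ) := Nat.cast_pos.mpr (Finset.card_pos.mpr hS)
  obtain ⟨s, hs⟩ : ∃ s, ∑ i ∈ S, ⟪w, x i⟫ = s := ⟨_, rfl⟩
  have hsum : ∑ i ∈ S, (1 - a * (⟪w, x i⟫ + b))
      = (S.card : ℝ) - a * (s + (S.card : ℝ) * b) := by
    rw [Finset.sum_sub_distrib, Finset.sum_const, nsmul_eq_mul, mul_one,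
      ← Finset.mul_sum, Finset.sum_add_distrib, Finset.sum_const, nsmul_eq_mul, hs]
  have hcen : 1 - a * (⟪w, centroidOf x S⟫ + b)
      = (S.card : ℝ)⁻¹ * ∑ i ∈ S, (1 - a * (⟪w, x i⟫ + b)) := by
    rw [inner_centroid, hs, hsum]
    first
    | linear_combination (a * b - 1) * inv_mul_cancel₀ hc.ne'
    | linear_combination (1 - a * b) * inv_mul_cancel₀ hc.ne'
  rcases hside with h | h
  · have hpos : 0 < ∑ i ∈ S, (1 - a * (⟪w, x i⟫ + b)) := Finset.sum_pos h hS
    rw [hcen, max_eq_right (le_of_lt (mul_pos (inv_pos.mpr hc) hpos)),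
      Finset.sum_congr rfl (fun i hi => max_eq_right (le_of_lt (h i hi))),
      ← mul_assoc, mul_inv_cancel₀ hc.ne', one_mul]
  · have hnp : ∑ i ∈ S, (1 - a * (⟪w, x i⟫ + b)) ≤ 0 := Finset.sum_nonpos h
    rw [hcen, max_eq_left (mul_nonpos_of_nonneg_of_nonpos (inv_nonneg.mpr hc.le) hnp),
      Finset.sum_congr rfl (fun i hi => max_eq_left (h i hi)),
      Finset.sum_const, smul_zero, mul_zero]

/-- The semi-supervised SVM (S³VM) objective. -/
def s3J {n m : ℕ} (x : Fin n → EuclideanSpace ℝ (Fin m)) (y : Fin n → ℝ)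
    (Il : Finset (Fin n)) (Ml Mu : ℝ)
    (w : EuclideanSpace ℝ (Fin m)) (b : ℝ) (d : Fin n → ℝ) : ℝ :=
  (1 / 2) * ‖w‖ ^ 2
    + Ml * ∑ i ∈ Il, max 0 (1 - y i * (⟪w, x i⟫ + b))
    + Mu * ∑ i ∈ Ilᶜ, max 0 (1 - d i * (⟪w, x i⟫ + b))

/-- The weighted aggregated S³VM objective. -/
def s3H {n m Kl Ku : ℕ} (x : Fin n → EuclideanSpace ℝ (Fin m))
    (Il : Finset (Fin n)) (Ml Mu : ℝ)
    (cl : Fin n → Fin Kl) (yhat : Fin Kl → ℝ) (cu : Fin n → Fin Ku)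
    (w : EuclideanSpace ℝ (Fin m)) (b : ℝ) (d : Fin Ku → ℝ) : ℝ :=
  (1 / 2) * ‖w‖ ^ 2
    + Ml * ∑ k, ((clusterIn Il cl k).card : ℝ) *
        max 0 (1 - yhat k * (⟪w, centroidOf x (clusterIn Il cl k)⟫ + b))
    + Mu * ∑ k, ((clusterIn Ilᶜ cu k).card : ℝ) *
        max 0 (1 - d k * (⟪w, centroidOf x (clusterIn Ilᶜ cu k)⟫ + b))

/-- If each labeled cluster is contained in `I⁺` or `I⁻` and each unlabeled
cluster (on which `d` is constant) is contained in one of `I⁺⁺`, `I⁺⁻`, `I⁻⁺`,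
`I⁻⁻`, then the S³VM objective coincides with the weighted aggregated
objective at the cluster centroids. -/
theorem s3vm_objective_aggregation (n m Kl Ku : ℕ)
    (x : Fin n → EuclideanSpace ℝ (Fin m)) (y : Fin n → ℝ)
    (Il : Finset (Fin n)) (hy : ∀ i ∈ Il, y i = 1 ∨ y i = -1)
    (Ml Mu : ℝ) (hMl : 0 < Ml) (hMu : 0 < Mu)
    (w : EuclideanSpace ℝ (Fin m)) (b : ℝ) (d : Fin n → ℝ)
    (hd : ∀ i ∈ Ilᶜ, d i = 1 ∨ d i = -1)
    (cl : Fin n → Fin Kl) (hneL : ∀ k, (clusterIn Il cl k).Nonempty)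
    (yhat : Fin Kl → ℝ) (hpure : ∀ i ∈ Il, yhat (cl i) = y i)
    (cu : Fin n → Fin Ku) (hneU : ∀ k, (clusterIn Ilᶜ cu k).Nonempty)
    (du : Fin Ku → ℝ) (hdu : ∀ i ∈ Ilᶜ, du (cu i) = d i)
    (hsideL : ∀ k,
      (∀ i ∈ clusterIn Il cl k, 0 < 1 - y i * (⟪w, x i⟫ + b)) ∨
      (∀ i ∈ clusterIn Il cl k, 1 - y i * (⟪w, x i⟫ + b) ≤ 0))
    (hsideU : ∀ k,
      (∀ i ∈ clusterIn Ilᶜ cu k,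
          0 < 1 - d i * (⟪w, x i⟫ + b) ∧ 0 < ⟪w, x i⟫ + b) ∨
      (∀ i ∈ clusterIn Ilᶜ cu k,
          0 < 1 - d i * (⟪w, x i⟫ + b) ∧ ⟪w, x i⟫ + b ≤ 0) ∨
      (∀ i ∈ clusterIn Ilᶜ cu k,
          1 - d i * (⟪w, x i⟫ + b) ≤ 0 ∧ 0 < ⟪w, x i⟫ + b) ∨
      (∀ i ∈ clusterIn Ilᶜ cu k,
          1 - d i * (⟪w, x i⟫ + b) ≤ 0 ∧ ⟪w, x i⟫ + b ≤ 0)) :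
    s3J x y Il Ml Mu w b d = s3H x Il Ml Mu cl yhat cu w b du := by
  have key : ∀ (K : ℕ) (S : Finset (Fin n)) (c : Fin n → Fin K) (a : Fin K → ℝ)
      (e : Fin n → ℝ)
      (hne : ∀ k, (clusterIn S c k).Nonempty)
      (hlab : ∀ i ∈ S, a (c i) = e i)
      (hside : ∀ k, (∀ i ∈ clusterIn S c k, 0 < 1 - e i * (⟪w, x i⟫ + b)) ∨
        (∀ i ∈ clusterIn S c k, 1 - e i * (⟪w, x i⟫ + b) ≤ 0)),
      ∑ i ∈ S, max 0 (1 - e i * (⟪w, x i⟫ + b)) =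
        ∑ k, ((clusterIn S c k).card : ℝ) *
          max 0 (1 - a k * (⟪w, centroidOf x (clusterIn S c k)⟫ + b)) := by
    intro K S c a e hne hlab hside
    rw [← Finset.sum_fiberwise_of_maps_to (g := c) (t := Finset.univ)
      (fun i _ => Finset.mem_univ (c i))]
    refine Finset.sum_congr rfl fun k _ => ?_
    have hmem : ∀ i ∈ clusterIn S c k, e i = a k := by
      intro i hi
      rcases Finset.mem_filter.mp hi with ⟨hiS, hik⟩
      rw [← hlab i hiS, hik]
    have hcongr : ∀ i ∈ clusterIn S c k,
        max 0 (1 - e i * (⟪w, x i⟫ + b)) = max 0 (1 - a k * (⟪w, x i⟫ + b)) := by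
      intro i hi; rw [hmem i hi]
    rw [show (S.filter fun i => c i = k) = clusterIn S c k from rfl,
      Finset.sum_congr rfl hcongr]
    exact hinge_cluster x w b (a k) _ (hne k) (by
      rcases hside k with h | h
      · exact Or.inl fun i hi => (hmem i hi) ▸ h i hi
      · exact Or.inr fun i hi => (hmem i hi) ▸ h i hi)
  unfold s3J s3H
  rw [key Kl Il cl yhat y hneL hpure hsideL,
    key Ku Ilᶜ cu du d hneU hdu (fun k => by
      rcases hsideU k with h | h | h | h
      · exact Or.inl fun i hi => (h i hi).1
      · exact Or.inl fun i hi => (h i hi).1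
      · exact Or.inr fun i hi => (h i hi).1
      · exact Or.inr fun i hi => (h i hi).1)]


end
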